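/- arXiv:2007.13473 — 4 statements merged into one kernel-verified Lean document; each statement's English description precedes it below -/
import Mathlib

section
/- If the primal linear program (P_b) has a nondegenerate optimal basic solution, then the dual program (D_b) has a unique optimal solution. -/
open Matrix

noncomputable section

variable {m d : ℕ}

/-- The primal feasible set `P(b) = {x : A x = b, x ≥ 0}`. -/
def feasSet (A : Matrix (Fin m) (Fin d) ℝ) (b : Fin m → ℝ) : Set (Fin d → ℝ) :=
  {x | A *ᵥ x = b ∧ ∀ i, 0 ≤ x i}

/-- The optimality set `OPT(b)` of the primal program `(P_b)`. -/
def optSet (A : Matrix (Fin m) (Fin d) ℝ) (b : Fin m → ℝ) (c : Fin d → ℝ) :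
    Set (Fin d → ℝ) :=
  {x | x ∈ feasSet A b ∧ ∀ y ∈ feasSet A b, c ⬝ᵥ x ≤ c ⬝ᵥ y}

/-- The dual feasible set `{λ : Aᵀ λ ≤ c}`. -/
def dualFeasSet (A : Matrix (Fin m) (Fin d) ℝ) (c : Fin d → ℝ) : Set (Fin m → ℝ) :=
  {l | ∀ j, (Aᵀ *ᵥ l) j ≤ c j}

/-- The set of optimal solutions of the dual program `(D_b)`. -/
def dualOptSet (A : Matrix (Fin m) (Fin d) ℝ) (b : Fin m → ℝ) (c : Fin d → ℝ) :
    Set (Fin m → ℝ) :=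
  {l | l ∈ dualFeasSet A c ∧ ∀ mu ∈ dualFeasSet A c, b ⬝ᵥ mu ≤ b ⬝ᵥ l}

/-- The submatrix `A_I` of the columns indexed by `I`, where the subset
`I ⊆ {1,…,d}` of cardinality `m` is encoded by the strictly monotone
enumeration `e : Fin m → Fin d` of its elements. -/
def subMat (A : Matrix (Fin m) (Fin d) ℝ) (e : Fin m → Fin d) :
    Matrix (Fin m) (Fin m) ℝ :=
  A.submatrix id e

/-- `e` encodes a basis: a subset of size `m` of the columns (strictly monotone
enumeration) whose corresponding submatrix `A_I` is invertible. -/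
def IsBasis (A : Matrix (Fin m) (Fin d) ℝ) (e : Fin m → Fin d) : Prop :=
  StrictMono e ∧ IsUnit (subMat A e).det

/-- The primal basic solution `x(I, v)`: equal to `(A_I)⁻¹ v` on the coordinates
in `I` and `0` elsewhere. -/
def basicSol (A : Matrix (Fin m) (Fin d) ℝ) (e : Fin m → Fin d) (v : Fin m → ℝ) :
    Fin d → ℝ :=
  fun i => ∑ j, if e j = i then ((subMat A e)⁻¹ *ᵥ v) j else 0

/-- The dual basic solution `λ(I) = (A_I)⁻ᵀ c_I`. -/
def dualSol (A : Matrix (Fin m) (Fin d) ℝ) (c : Fin d → ℝ) (e : Fin m → Fin d) :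
    Fin m → ℝ :=
  ((subMat A e)ᵀ)⁻¹ *ᵥ fun j => c (e j)

/-- `I` is a dual feasible basis: `Aᵀ λ(I) ≤ c`. -/
def DualFeasibleBasis (A : Matrix (Fin m) (Fin d) ℝ) (c : Fin d → ℝ)
    (e : Fin m → Fin d) : Prop :=
  IsBasis A e ∧ ∀ j, (Aᵀ *ᵥ dualSol A c e) j ≤ c j

/-- `I` is a primal feasible basis for `(P_b)`: `x(I,b) ≥ 0`. -/
def PrimalFeasibleBasis (A : Matrix (Fin m) (Fin d) ℝ) (b : Fin m → ℝ)
    (e : Fin m → Fin d) : Prop :=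
  IsBasis A e ∧ ∀ i, 0 ≤ basicSol A e b i

section AuxLemmas

variable {m d : ℕ}

lemma sum_ite_mul_aux (e : Fin m → Fin d) (c : Fin d → ℝ) (u : Fin m → ℝ) :
    ∑ i, c i * ∑ j, (if e j = i then u j else 0) = ∑ j, c (e j) * u j := by
  simp_rw [Finset.mul_sum, mul_ite, mul_zero]
  rw [Finset.sum_comm]
  simp [Finset.sum_ite_eq]

lemma dot_basicSol (A : Matrix (Fin m) (Fin d) ℝ) (e : Fin m → Fin d)
    (c : Fin d → ℝ) (v : Fin m → ℝ) :
    c ⬝ᵥ basicSol A e v = ∑ j, c (e j) * ((subMat A e)⁻¹ *ᵥ v) j := by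
  simp only [dotProduct, basicSol]
  exact sum_ite_mul_aux e c _

lemma dot_basicSol' (A : Matrix (Fin m) (Fin d) ℝ) (e : Fin m → Fin d)
    (c : Fin d → ℝ) (v : Fin m → ℝ) :
    c ⬝ᵥ basicSol A e v = dualSol A c e ⬝ᵥ v := by
  rw [dot_basicSol]
  unfold dualSol
  rw [dotProduct_comm, Matrix.dotProduct_mulVec, ← Matrix.transpose_nonsing_inv,
    Matrix.vecMul_transpose, dotProduct_comm]
  rfl

lemma mulVec_basicSol {A : Matrix (Fin m) (Fin d) ℝ} {e : Fin m → Fin d}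
    (hdet : IsUnit (subMat A e).det) (v : Fin m → ℝ) :
    A *ᵥ basicSol A e v = v := by
  funext r
  have h : (A *ᵥ basicSol A e v) r = ∑ j, A r (e j) * ((subMat A e)⁻¹ *ᵥ v) j := by
    simp only [Matrix.mulVec, dotProduct, basicSol]
    exact sum_ite_mul_aux e (A r) _
  have h2 : ∑ j, A r (e j) * ((subMat A e)⁻¹ *ᵥ v) j
      = (subMat A e *ᵥ ((subMat A e)⁻¹ *ᵥ v)) r := rfl
  rw [h, h2, Matrix.mulVec_mulVec, Matrix.mul_nonsing_inv _ hdet, Matrix.one_mulVec]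

lemma basicSol_eq_zero {A : Matrix (Fin m) (Fin d) ℝ} {e : Fin m → Fin d}
    {v : Fin m → ℝ} {i : Fin d} (hi : i ∉ Set.range e) :
    basicSol A e v i = 0 := by
  unfold basicSol
  exact Finset.sum_eq_zero fun j _ => if_neg (fun h => hi ⟨j, h⟩)

lemma dot_mulVec_dual (A : Matrix (Fin m) (Fin d) ℝ) (y : Fin d → ℝ) (μ : Fin m → ℝ) :
    (A *ᵥ y) ⬝ᵥ μ = y ⬝ᵥ (Aᵀ *ᵥ μ) := by
  calc (A *ᵥ y) ⬝ᵥ μ = μ ⬝ᵥ (A *ᵥ y) := dotProduct_comm _ _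
  _ = (μ ᵥ* A) ⬝ᵥ y := Matrix.dotProduct_mulVec _ _ _
  _ = (Aᵀ *ᵥ μ) ⬝ᵥ y := by rw [Matrix.mulVec_transpose]
  _ = y ⬝ᵥ (Aᵀ *ᵥ μ) := dotProduct_comm _ _

end AuxLemmas

/-- Proposition 2.5 (i): if `(P_b)` has a nondegenerate optimal basic solution
(a primal optimal basic solution with exactly `m` nonzero coordinates), then the
dual `(D_b)` has a unique optimal solution. -/
theorem stmt1 (hm : 1 ≤ m) (hmd : m ≤ d)
    (A : Matrix (Fin m) (Fin d) ℝ) (hA : A.rank = m)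
    (b : Fin m → ℝ) (c : Fin d → ℝ)
    (hopt : ∃ e : Fin m → Fin d, IsBasis A e ∧
      basicSol A e b ∈ optSet A b c ∧
      {i | basicSol A e b i ≠ 0}.ncard = m) :
    ∃! l : Fin m → ℝ, l ∈ dualOptSet A b c := by
  obtain ⟨e, ⟨hmono, hdet⟩, hxopt, hcard⟩ := hopt
  have hinj : Function.Injective e := hmono.injective
  have hdetT : IsUnit ((subMat A e)ᵀ).det := by rwa [Matrix.det_transpose]
  obtain ⟨⟨hxfeasA, hxnn⟩, hxmin⟩ := hxopt
  -- the support of the basic solution is exactly the range of `e`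
  have hrange_card : (Set.range e).ncard = m := by
    rw [← Set.image_univ, Set.ncard_image_of_injective _ hinj, Set.ncard_univ,
      Nat.card_eq_fintype_card, Fintype.card_fin]
  have hsub : {i | basicSol A e b i ≠ 0} ⊆ Set.range e := by
    intro i hi
    by_contra h
    exact hi (basicSol_eq_zero h)
  have hsupp : {i | basicSol A e b i ≠ 0} = Set.range e :=
    Set.eq_of_subset_of_ncard_le hsub (by rw [hrange_card, hcard]) (Set.finite_range e)
  have hxpos : ∀ k, 0 < basicSol A e b (e k) := by
    intro k
    have hne : basicSol A e b (e k) ≠ 0 := by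
      have : e k ∈ Set.range e := Set.mem_range_self k
      rw [← hsupp] at this
      exact this
    exact lt_of_le_of_ne (hxnn (e k)) (Ne.symm hne)
  -- the dual basic solution satisfies the basis equations
  have hBTlam : (subMat A e)ᵀ *ᵥ dualSol A c e = fun j => c (e j) := by
    unfold dualSol
    rw [Matrix.mulVec_mulVec, Matrix.mul_nonsing_inv _ hdetT, Matrix.one_mulVec]
  have hAtlam : ∀ k, (Aᵀ *ᵥ dualSol A c e) (e k) = c (e k) := by
    intro k
    have h : (Aᵀ *ᵥ dualSol A c e) (e k) = ((subMat A e)ᵀ *ᵥ dualSol A c e) k := rfl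
    rw [h, hBTlam]
  -- weak duality
  have hweak : ∀ μ ∈ dualFeasSet A c, ∀ y ∈ feasSet A b, b ⬝ᵥ μ ≤ c ⬝ᵥ y := by
    intro μ hμ y hy
    have h1 : b ⬝ᵥ μ = y ⬝ᵥ (Aᵀ *ᵥ μ) := by rw [← hy.1, dot_mulVec_dual]
    rw [h1]
    simp only [dotProduct]
    apply Finset.sum_le_sum
    intro i _
    calc y i * (Aᵀ *ᵥ μ) i ≤ y i * c i := mul_le_mul_of_nonneg_left (hμ i) (hy.2 i)
    _ = c i * y i := mul_comm _ _
  -- equality of values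
  have hval : c ⬝ᵥ basicSol A e b = b ⬝ᵥ dualSol A c e := by
    rw [dot_basicSol', dotProduct_comm]
  -- dual feasibility of `dualSol A c e`
  have hdualfeas : dualSol A c e ∈ dualFeasSet A c := by
    intro j0
    by_contra hcon
    push_neg at hcon
    have hj0 : j0 ∉ Set.range e := by
      rintro ⟨k, rfl⟩
      exact hcon.ne' (hAtlam k)
    set v : Fin m → ℝ := fun r => A r j0 with hv
    set δ : Fin d → ℝ := fun i => if i = j0 then 1 else 0 with hδ
    set w : Fin d → ℝ := δ - basicSol A e v with hw
    have hAδ : A *ᵥ δ = v := by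
      funext r
      simp [hδ, Matrix.mulVec, dotProduct, mul_ite, Finset.sum_ite_eq', hv]
    have hAw : A *ᵥ w = 0 := by
      rw [hw, Matrix.mulVec_sub, hAδ, mulVec_basicSol hdet, sub_self]
    have hcw : c ⬝ᵥ w = c j0 - (Aᵀ *ᵥ dualSol A c e) j0 := by
      rw [hw, dotProduct_sub, dot_basicSol']
      congr 1
      · simp [hδ, dotProduct, mul_ite, Finset.sum_ite_eq']
      · simp [dotProduct, Matrix.mulVec, Matrix.transpose_apply, hv, mul_comm]
    have hcwneg : c ⬝ᵥ w < 0 := by rw [hcw]; linarith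
    have hwsupp : ∀ i, i ≠ j0 → i ∉ Set.range e → w i = 0 := by
      intro i h1 h2
      simp [hw, hδ, Pi.sub_apply, if_neg h1, basicSol_eq_zero h2]
    have hdpos : 0 < d := lt_of_lt_of_le hm hmd
    haveI : Nonempty (Fin d) := ⟨⟨0, hdpos⟩⟩
    set t : ℝ := Finset.univ.inf' Finset.univ_nonempty
      (fun i => if w i < 0 then basicSol A e b i / (-w i) else 1) with ht
    have htpos : 0 < t := by
      rw [ht, Finset.lt_inf'_iff]
      intro i _
      split_ifs with hwi
      · have hi : i ∈ Set.range e := by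
          by_contra h
          have hij : i ≠ j0 := by
            rintro rfl
            have hw1 : w i = 1 := by
              simp [hw, hδ, Pi.sub_apply, basicSol_eq_zero hj0]
            rw [hw1] at hwi; linarith
          rw [hwsupp i hij h] at hwi; linarith
        obtain ⟨k, rfl⟩ := hi
        exact div_pos (hxpos k) (by linarith)
      · exact one_pos
    have hyfeas : (basicSol A e b + t • w) ∈ feasSet A b := by
      constructor
      · rw [Matrix.mulVec_add, Matrix.mulVec_smul, hAw, smul_zero, add_zero, hxfeasA]
      · intro i
        simp only [Pi.add_apply, Pi.smul_apply, smul_eq_mul]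
        by_cases hwi : w i < 0
        · have hti : t ≤ basicSol A e b i / (-w i) := by
            have h := Finset.inf'_le
              (fun i => if w i < 0 then basicSol A e b i / (-w i) else 1)
              (Finset.mem_univ i)
            rwa [if_pos hwi, ← ht] at h
          have hwpos : 0 < -w i := by linarith
          have h2 : t * (-w i) ≤ basicSol A e b i := (le_div_iff₀ hwpos).mp hti
          rw [mul_neg] at h2
          linarith
        · push_neg at hwi
          have := mul_nonneg htpos.le hwi
          have := hxnn i
          linarith
    have hless : c ⬝ᵥ (basicSol A e b + t • w) < c ⬝ᵥ basicSol A e b := by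
      rw [dotProduct_add, dotProduct_smul]
      have h := mul_neg_of_pos_of_neg htpos hcwneg
      rw [smul_eq_mul]
      linarith
    exact absurd (hxmin _ hyfeas) (not_le.mpr hless)
  -- `dualSol A c e` is dual optimal
  have hlamopt : dualSol A c e ∈ dualOptSet A b c := by
    refine ⟨hdualfeas, fun μ hμ => ?_⟩
    calc b ⬝ᵥ μ ≤ c ⬝ᵥ basicSol A e b := hweak μ hμ _ ⟨hxfeasA, hxnn⟩
    _ = b ⬝ᵥ dualSol A c e := hval
  -- uniqueness via complementary slackness
  refine ⟨dualSol A c e, hlamopt, fun μ hμ => ?_⟩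
  have h1 : b ⬝ᵥ μ = c ⬝ᵥ basicSol A e b :=
    le_antisymm (hweak μ hμ.1 _ ⟨hxfeasA, hxnn⟩) (hval ▸ hμ.2 _ hdualfeas)
  have hxA : basicSol A e b ⬝ᵥ (Aᵀ *ᵥ μ) = b ⬝ᵥ μ := by
    rw [← dot_mulVec_dual, hxfeasA]
  have hnn : ∀ i ∈ Finset.univ, 0 ≤ basicSol A e b i * (c i - (Aᵀ *ᵥ μ) i) :=
    fun i _ => mul_nonneg (hxnn i) (by linarith [hμ.1 i])
  have h2 : ∑ i, basicSol A e b i * (c i - (Aᵀ *ᵥ μ) i) = 0 := by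
    simp only [mul_sub, Finset.sum_sub_distrib]
    have e1 : ∑ i, basicSol A e b i * c i = c ⬝ᵥ basicSol A e b := by
      simp [dotProduct, mul_comm]
    have e2 : ∑ i, basicSol A e b i * (Aᵀ *ᵥ μ) i = basicSol A e b ⬝ᵥ (Aᵀ *ᵥ μ) := rfl
    rw [e1, e2, hxA, h1, sub_self]
  have h4 : ∀ k, (Aᵀ *ᵥ μ) (e k) = c (e k) := by
    intro k
    have hz := (Finset.sum_eq_zero_iff_of_nonneg hnn).mp h2 (e k) (Finset.mem_univ _)
    rcases mul_eq_zero.mp hz with h | h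
    · exact absurd h (hxpos k).ne'
    · linarith
  have hBTμ : (subMat A e)ᵀ *ᵥ μ = fun j => c (e j) := by
    funext k
    have h : ((subMat A e)ᵀ *ᵥ μ) k = (Aᵀ *ᵥ μ) (e k) := rfl
    rw [h, h4]
  calc μ = ((subMat A e)ᵀ)⁻¹ *ᵥ ((subMat A e)ᵀ *ᵥ μ) := by
        rw [Matrix.mulVec_mulVec, Matrix.nonsing_inv_mul _ hdetT, Matrix.one_mulVec]
  _ = dualSol A c e := by rw [hBTμ]; rfl

end
end

section
/- If the primal linear program (P_b) has a unique optimal solution which is a nondegenerate basic solution, then the dual program (D_b) has a unique optimal solution, and this dual optimal solution is nondegenerate. -/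
open Matrix

noncomputable section

variable {m d : ℕ}

lemma my_dot_mulVec {n p : ℕ} (M : Matrix (Fin n) (Fin p) ℝ) (v : Fin n → ℝ) (a : Fin p → ℝ) :
    v ⬝ᵥ (M *ᵥ a) = (Mᵀ *ᵥ v) ⬝ᵥ a := by
  rw [Matrix.dotProduct_mulVec, Matrix.mulVec_transpose]

lemma mulVec_dot {n p : ℕ} (M : Matrix (Fin n) (Fin p) ℝ) (x : Fin p → ℝ) (mu : Fin n → ℝ) :
    (M *ᵥ x) ⬝ᵥ mu = x ⬝ᵥ (Mᵀ *ᵥ mu) := by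
  rw [dotProduct_comm, my_dot_mulVec, dotProduct_comm]

lemma mulVec_col {n p : ℕ} (M : Matrix (Fin n) (Fin p) ℝ) (l : Fin n → ℝ) (j : Fin p) :
    (Mᵀ *ᵥ l) j = l ⬝ᵥ (fun i => M i j) := by
  simp [mulVec, dotProduct, mul_comm]

def emb (e : Fin m → Fin d) (y : Fin m → ℝ) : Fin d → ℝ :=
  fun i => ∑ j, if e j = i then y j else 0

lemma emb_apply (e : Fin m → Fin d) (he : Function.Injective e) (y : Fin m → ℝ) (k : Fin m) :
    emb e y (e k) = y k := by
  simp [emb, he.eq_iff]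

lemma emb_zero (e : Fin m → Fin d) (y : Fin m → ℝ) {i : Fin d} (hi : i ∉ Set.range e) :
    emb e y i = 0 := by
  apply Finset.sum_eq_zero
  intro j _
  rw [if_neg]
  exact fun h => hi ⟨j, h⟩

lemma mulVec_emb (A : Matrix (Fin m) (Fin d) ℝ) (e : Fin m → Fin d) (y : Fin m → ℝ) :
    A *ᵥ emb e y = subMat A e *ᵥ y := by
  ext i
  simp only [mulVec, dotProduct, emb, Finset.mul_sum, mul_ite, mul_zero]
  rw [Finset.sum_comm]
  simp [subMat]

lemma dot_emb (g : Fin d → ℝ) (e : Fin m → Fin d) (y : Fin m → ℝ) :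
    g ⬝ᵥ emb e y = (fun k => g (e k)) ⬝ᵥ y := by
  simp only [dotProduct, emb, Finset.mul_sum, mul_ite, mul_zero]
  rw [Finset.sum_comm]
  simp

lemma tsubMat_mulVec (A : Matrix (Fin m) (Fin d) ℝ) (e : Fin m → Fin d) (μ : Fin m → ℝ) (k : Fin m) :
    ((subMat A e)ᵀ *ᵥ μ) k = (Aᵀ *ᵥ μ) (e k) := by
  simp [subMat, mulVec, dotProduct]

/-- Proposition 2.5 (ii): if `(P_b)` has a unique optimal solution which is a
nondegenerate basic solution (exactly `m` nonzero coordinates), then the dual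
`(D_b)` has a unique optimal solution, and this dual optimal solution is
nondegenerate (at most `m` of the `d` inequalities `Aᵀλ ≤ c` are equalities). -/
theorem stmt2 (hm : 1 ≤ m) (hmd : m ≤ d)
    (A : Matrix (Fin m) (Fin d) ℝ) (hA : A.rank = m)
    (b : Fin m → ℝ) (c : Fin d → ℝ)
    (hopt : ∃ e : Fin m → Fin d, IsBasis A e ∧
      optSet A b c = {basicSol A e b} ∧
      {i | basicSol A e b i ≠ 0}.ncard = m) :
    ∃ l : Fin m → ℝ, dualOptSet A b c = {l} ∧
      {j | (Aᵀ *ᵥ l) j = c j}.ncard ≤ m := by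
  obtain ⟨e, ⟨hmono, hdet⟩, hoptset, hcard⟩ := hopt
  have he : Function.Injective e := hmono.injective
  set B := subMat A e with hB
  have hdetT : IsUnit Bᵀ.det := by rwa [Matrix.det_transpose]
  set xs := basicSol A e b with hxs
  set ls := dualSol A c e with hls
  have hxs_emb : xs = emb e (B⁻¹ *ᵥ b) := rfl
  -- x* is optimal
  have hxopt : xs ∈ optSet A b c := by rw [hoptset]; rfl
  have hxfeas : xs ∈ feasSet A b := hxopt.1
  have hxpos0 : ∀ i, 0 ≤ xs i := hxfeas.2
  -- range e facts
  have hrange_fin : (Set.range e).Finite := Set.finite_range e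
  have hrange_card : (Set.range e).ncard = m := by
    have h1 : Set.range e = ↑(Finset.univ.image e) := by simp
    rw [h1, Set.ncard_coe_finset, Finset.card_image_of_injective _ he,
      Finset.card_univ, Fintype.card_fin]
  have hsupp_sub : {i | xs i ≠ 0} ⊆ Set.range e := by
    intro i hi
    by_contra hir
    exact hi (by rw [hxs_emb]; exact emb_zero e _ hir)
  have hsupp_eq : {i | xs i ≠ 0} = Set.range e :=
    Set.eq_of_subset_of_ncard_le hsupp_sub (by rw [hrange_card, hcard]) hrange_fin
  have hxs_pos : ∀ k, 0 < xs (e k) := by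
    intro k
    have : e k ∈ {i | xs i ≠ 0} := hsupp_eq ▸ Set.mem_range_self k
    exact lt_of_le_of_ne (hxpos0 _) (Ne.symm this)
  have hxs_zero : ∀ i, i ∉ Set.range e → xs i = 0 := by
    intro i hi
    by_contra h
    exact hi (hsupp_sub h)
  -- equality on basic indices: (Aᵀ λ*) (e k) = c (e k)
  have hBls : Bᵀ *ᵥ ls = fun k => c (e k) := by
    rw [hls, dualSol, Matrix.mulVec_mulVec, Matrix.mul_nonsing_inv _ hdetT, Matrix.one_mulVec]
  have heq_basic : ∀ k, (Aᵀ *ᵥ ls) (e k) = c (e k) := by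
    intro k
    rw [← tsubMat_mulVec A e ls k, ← hB, hBls]
  -- strict inequality on nonbasic indices
  have hstrict : ∀ j, j ∉ Set.range e → (Aᵀ *ᵥ ls) j < c j := by
    intro j hj
    set a : Fin m → ℝ := fun i => A i j with ha
    set u : Fin m → ℝ := B⁻¹ *ᵥ a with hu
    -- choose t
    have hne : (Finset.univ : Finset (Fin m)).Nonempty := by
      refine ⟨⟨0, hm⟩, Finset.mem_univ _⟩
    set t : ℝ := Finset.univ.inf' hne (fun k => xs (e k) / (|u k| + 1)) with ht
    have htpos : 0 < t := by
      rw [ht]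
      apply Finset.lt_inf'_iff hne |>.2
      intro k _
      exact div_pos (hxs_pos k) (by positivity)
    have htk : ∀ k, t * |u k| ≤ xs (e k) := by
      intro k
      have h1 : t ≤ xs (e k) / (|u k| + 1) := Finset.inf'_le _ (Finset.mem_univ k)
      have h2 : 0 < |u k| + 1 := by positivity
      calc t * |u k| ≤ t * (|u k| + 1) := by nlinarith [htpos]
        _ ≤ xs (e k) := by rw [← div_mul_cancel₀ (xs (e k)) (ne_of_gt h2)]; nlinarith [h2]
    set w : Fin d → ℝ := fun i => (if i = j then 1 else 0) - emb e u i with hw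
    have hwj : w j = 1 := by
      rw [hw]; simp [emb_zero e u hj]
    have hwek : ∀ k, w (e k) = - u k := by
      intro k
      rw [hw]
      simp only
      rw [if_neg (fun h => hj ⟨k, h⟩), emb_apply e he]
      ring
    have hwz : ∀ i, i ∉ Set.range e → i ≠ j → w i = 0 := by
      intro i hi hij
      rw [hw]; simp only
      rw [if_neg hij, emb_zero e u hi]; ring
    have hAw : A *ᵥ w = 0 := by
      have h1 : A *ᵥ (fun i => if i = j then (1:ℝ) else 0) = a := by
        ext i
        simp [mulVec, dotProduct, ha]
      have h2 : A *ᵥ emb e u = a := by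
        rw [mulVec_emb, ← hB, hu, Matrix.mulVec_mulVec, Matrix.mul_nonsing_inv _ hdet,
          Matrix.one_mulVec]
      have : w = (fun i => if i = j then (1:ℝ) else 0) - emb e u := rfl
      rw [this, Matrix.mulVec_sub, h1, h2, sub_self]
    set y : Fin d → ℝ := xs + t • w with hy
    have hyfeas : y ∈ feasSet A b := by
      constructor
      · rw [hy, Matrix.mulVec_add, Matrix.mulVec_smul, hAw, smul_zero, add_zero]
        exact hxfeas.1
      · intro i
        rcases eq_or_ne i j with rfl | hij
        · have : y i = t := by
            rw [hy]
            simp [hxs_zero i hj, hwj]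
          rw [this]; exact le_of_lt htpos
        · by_cases hir : i ∈ Set.range e
          · obtain ⟨k, rfl⟩ := hir
            have : y (e k) = xs (e k) - t * u k := by
              rw [hy]; simp [hwek k]; ring
            rw [this]
            have := htk k
            have habs : u k ≤ |u k| := le_abs_self _
            nlinarith [htpos]
          · have : y i = 0 := by
              rw [hy]; simp [hxs_zero i hir, hwz i hir hij]
            rw [this]
        
    have hyne : y ≠ xs := by
      intro h
      have : y j = xs j := by rw [h]
      rw [hy] at this
      simp [hwj, hxs_zero j hj] at this
      exact absurd this (ne_of_gt htpos)
    have hcy : c ⬝ᵥ y = c ⬝ᵥ xs + t * (c ⬝ᵥ w) := by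
      rw [hy, dotProduct_add, dotProduct_smul]
      ring_nf
    have hcw_eq : c ⬝ᵥ w = c j - (Aᵀ *ᵥ ls) j := by
      have h1 : c ⬝ᵥ w = c j - (fun k => c (e k)) ⬝ᵥ u := by
        have : c ⬝ᵥ (fun i => if i = j then (1:ℝ) else 0) = c j := by
          simp [dotProduct]
        rw [hw]
        rw [show (fun i => (if i = j then (1:ℝ) else 0) - emb e u i)
            = (fun i => if i = j then (1:ℝ) else 0) - emb e u from rfl]
        rw [dotProduct_sub, this, dot_emb]
      have h2 : (fun k => c (e k)) ⬝ᵥ u = (Aᵀ *ᵥ ls) j := by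
        rw [hu, my_dot_mulVec, Matrix.transpose_nonsing_inv, mulVec_col]
        rfl
      rw [h1, h2]
    have hle : c ⬝ᵥ xs ≤ c ⬝ᵥ y := hxopt.2 y hyfeas
    have hcw_nonneg : 0 ≤ c ⬝ᵥ w := by
      by_contra h
      push_neg at h
      nlinarith [hcy, hle, htpos]
    have hcw_pos : 0 < c ⬝ᵥ w := by
      rcases lt_or_eq_of_le hcw_nonneg with h | h
      · exact h
      · exfalso
        have hyopt : y ∈ optSet A b c := by
          constructor
          · exact hyfeas
          · intro z hz
            have : c ⬝ᵥ y = c ⬝ᵥ xs := by rw [hcy, ← h]; ring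
            rw [this]
            exact hxopt.2 z hz
        rw [hoptset] at hyopt
        exact hyne hyopt
    linarith [hcw_eq ▸ hcw_pos]
  -- dual feasibility of ls
  have hlfeas : ls ∈ dualFeasSet A c := by
    intro j
    by_cases hjr : j ∈ Set.range e
    · obtain ⟨k, rfl⟩ := hjr
      exact le_of_eq (heq_basic k)
    · exact le_of_lt (hstrict j hjr)
  -- weak duality
  have hweak : ∀ mu ∈ dualFeasSet A c, b ⬝ᵥ mu ≤ c ⬝ᵥ xs := by
    intro mu hmu
    have h1 : b ⬝ᵥ mu = xs ⬝ᵥ (Aᵀ *ᵥ mu) := by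
      rw [← hxfeas.1, mulVec_dot]
    rw [h1, dotProduct_comm c xs]
    apply Finset.sum_le_sum
    intro i _
    exact mul_le_mul_of_nonneg_left (hmu i) (hxpos0 i)
  -- value equality
  have hval : b ⬝ᵥ ls = c ⬝ᵥ xs := by
    have h1 : b ⬝ᵥ ls = xs ⬝ᵥ (Aᵀ *ᵥ ls) := by
      rw [← hxfeas.1, mulVec_dot]
    rw [h1, dotProduct_comm c xs]
    apply Finset.sum_congr rfl
    intro i _
    by_cases hir : i ∈ Set.range e
    · obtain ⟨k, rfl⟩ := hir
      rw [heq_basic k]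
    · rw [hxs_zero i hir]; ring
  have hlopt : ls ∈ dualOptSet A b c := by
    refine ⟨hlfeas, fun mu hmu => ?_⟩
    rw [hval]
    exact hweak mu hmu
  refine ⟨ls, ?_, ?_⟩
  · ext mu
    simp only [Set.mem_singleton_iff]
    constructor
    · rintro ⟨hmufeas, hmuopt⟩
      have hmuval : b ⬝ᵥ mu = c ⬝ᵥ xs := by
        have h1 := hmuopt ls hlfeas
        have h2 := hweak mu hmufeas
        rw [hval] at h1
        linarith
      -- complementary slackness
      have hslack : ∀ k, (Aᵀ *ᵥ mu) (e k) = c (e k) := by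
        have hsum : ∑ i, xs i * (c i - (Aᵀ *ᵥ mu) i) = 0 := by
          have h1 : b ⬝ᵥ mu = xs ⬝ᵥ (Aᵀ *ᵥ mu) := by
            rw [← hxfeas.1, mulVec_dot]
          have h2 : xs ⬝ᵥ c = c ⬝ᵥ xs := dotProduct_comm _ _
          simp only [mul_sub, Finset.sum_sub_distrib]
          have : ∑ i, xs i * c i = c ⬝ᵥ xs := by rw [← h2]; rfl
          rw [this]
          have : ∑ i, xs i * (Aᵀ *ᵥ mu) i = xs ⬝ᵥ (Aᵀ *ᵥ mu) := rfl
          rw [this, ← h1, hmuval, sub_self]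
        have hterm : ∀ i ∈ Finset.univ, (0:ℝ) ≤ xs i * (c i - (Aᵀ *ᵥ mu) i) := by
          intro i _
          exact mul_nonneg (hxpos0 i) (by linarith [hmufeas i])
        have := (Finset.sum_eq_zero_iff_of_nonneg hterm).1 hsum
        intro k
        have hk := this (e k) (Finset.mem_univ _)
        have hx := hxs_pos k
        rcases mul_eq_zero.1 hk with h | h
        · exact absurd h (ne_of_gt hx)
        · linarith [sub_eq_zero.1 h]
      -- Bᵀ mu = c ∘ e hence mu = ls
      have hBmu : Bᵀ *ᵥ mu = fun k => c (e k) := by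
        ext k
        rw [tsubMat_mulVec, ← hslack k]
      have : Bᵀ⁻¹ *ᵥ (Bᵀ *ᵥ mu) = mu := by
        rw [Matrix.mulVec_mulVec, Matrix.nonsing_inv_mul _ hdetT, Matrix.one_mulVec]
      rw [← this, hBmu]
      rfl
    · rintro rfl
      exact hlopt
  · have hsub : {j | (Aᵀ *ᵥ ls) j = c j} ⊆ Set.range e := by
      intro j hj
      by_contra hjr
      exact absurd hj (ne_of_lt (hstrict j hjr))
    calc {j | (Aᵀ *ᵥ ls) j = c j}.ncard ≤ (Set.range e).ncard :=
          Set.ncard_le_ncard hsub hrange_fin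
      _ = m := hrange_card


end
end

section
/- If the primal linear program (P_b) has a unique optimal solution which is a degenerate basic solution, then the dual program (D_b) has at least two distinct optimal solutions. -/
/-
Let `x₀` be the unique optimum and `J` its set of zero coordinates. Applying Farkas' lemma to a
homogenised system and using uniqueness of `x₀`, one finds a dual optimal `λ` with strict slack
`(Aᵀλ)_j < c_j` for every `j ∈ J` (strict complementarity). Since `x₀` is degenerate, its support
has fewer than `m` elements, so some `μ ≠ 0` is orthogonal to every column `A_j` of the support.
Then `bᵀμ = (A x₀)ᵀμ = 0`, and `λ + tμ` stays dual feasible for small `t ≠ 0` because it only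
moves constraints that are slack at `λ`. Thus `λ` and `λ + tμ` are two dual optima.
-/

open Matrix

noncomputable section

variable {m d : ℕ}

section Farkas

variable {𝕜 ι κ : Type*} [Field 𝕜] [LinearOrder 𝕜] [IsStrictOrderedRing 𝕜] [Fintype κ]

theorem sub_smul_dotProduct_eq_dotProduct_sub_smul {R : Type*} [CommRing R] (r : R)
    (v a y z : κ → R) :
    (v - (r * (v ⬝ᵥ y)) • a) ⬝ᵥ z = v ⬝ᵥ (z - (r * (a ⬝ᵥ z)) • y) := by
  simp only [sub_dotProduct, dotProduct_sub, smul_dotProduct, dotProduct_smul, smul_eq_mul]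
  ring

theorem farkas_finset (s : Finset ι) (a : ι → κ → 𝕜) (g : κ → 𝕜) :
    (∃ u : ι → 𝕜, 0 ≤ u ∧ ∑ i ∈ s, u i • a i = g) ∨
      ∃ y : κ → 𝕜, (∀ i ∈ s, 0 ≤ a i ⬝ᵥ y) ∧ g ⬝ᵥ y < 0 := by
  classical
  induction s using Finset.induction_on generalizing a g with
  | empty =>
    by_cases hg : g = 0
    · exact .inl ⟨0, le_rfl, by simp [hg]⟩
    · refine .inr ⟨-g, by simp, ?_⟩
      have : 0 < g ⬝ᵥ g := (Finset.sum_nonneg fun i _ => mul_self_nonneg (g i)).lt_of_ne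
        (Ne.symm (dotProduct_self_eq_zero.not.mpr hg))
      simpa [dotProduct_neg] using this
  | insert k s hk ih =>
    have sum_update (u : ι → 𝕜) (t : 𝕜) (a : ι → κ → 𝕜) :
        ∑ i ∈ insert k s, Function.update u k t i • a i = t • a k + ∑ i ∈ s, u i • a i := by
      rw [Finset.sum_insert hk, Function.update_self]
      congr 1
      exact Finset.sum_congr rfl fun i hi => by simp [ne_of_mem_of_not_mem hi hk]
    rcases ih a g with ⟨u, hu, hsum⟩ | ⟨y, hy, hgy⟩
    · exact .inl ⟨Function.update u k 0, le_update_iff.2 ⟨le_rfl, fun j _ => hu j⟩,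
        by rw [sum_update, zero_smul, zero_add, hsum]⟩
    by_cases hky : 0 ≤ a k ⬝ᵥ y
    · exact .inr ⟨y, Finset.forall_mem_insert _ _ _ |>.mpr ⟨hky, hy⟩, hgy⟩
    push Not at hky
    set r := (a k ⬝ᵥ y)⁻¹
    have hr0 : r < 0 := inv_lt_zero.mpr hky
    have hry : r * (a k ⬝ᵥ y) = 1 := inv_mul_cancel₀ hky.ne
    -- Project along `a k` onto the hyperplane `y⊥` and recurse on the remaining generators.
    rcases ih (fun i => a i - (r * (a i ⬝ᵥ y)) • a k) (g - (r * (g ⬝ᵥ y)) • a k) with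
      ⟨u, hu, hsum⟩ | ⟨z, hz, hgz⟩
    · refine .inl ⟨Function.update u k (r * (g ⬝ᵥ y) - ∑ i ∈ s, u i * (r * (a i ⬝ᵥ y))),
        le_update_iff.2 ⟨?_, fun j _ => hu j⟩, ?_⟩
      · refine sub_nonneg.mpr ((Finset.sum_nonpos fun i hi => ?_).trans
          (mul_pos_of_neg_of_neg hr0 hgy).le)
        exact mul_nonpos_of_nonneg_of_nonpos (hu i)
          (mul_nonpos_of_nonpos_of_nonneg hr0.le (hy i hi))
      · simp only [smul_sub, Finset.sum_sub_distrib, smul_smul, ← Finset.sum_smul] at hsum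
        rw [sub_eq_iff_eq_add] at hsum
        rw [sum_update, sub_smul, hsum]
        abel
    · refine .inr ⟨z - (r * (a k ⬝ᵥ z)) • y, Finset.forall_mem_insert _ _ _ |>.mpr ⟨?_, ?_⟩, ?_⟩
      · rw [dotProduct_sub, dotProduct_smul, smul_eq_mul, mul_right_comm, hry, one_mul, sub_self]
      · intro i hi
        simpa only [sub_smul_dotProduct_eq_dotProduct_sub_smul] using hz i hi
      · simpa only [sub_smul_dotProduct_eq_dotProduct_sub_smul] using hgz

end Farkas

theorem Matrix.exists_ne_zero_forall_mem_transpose_mulVec_eq_zero {𝕜 ι κ : Type*} [Field 𝕜]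
    [Fintype ι] [Fintype κ] (A : Matrix κ ι 𝕜) {S : Set ι} (hS : S.ncard < Fintype.card κ) :
    ∃ μ : κ → 𝕜, μ ≠ 0 ∧ ∀ i ∈ S, (Aᵀ *ᵥ μ) i = 0 := by
  classical
  let f : (κ → 𝕜) →ₗ[𝕜] (S → 𝕜) := (LinearMap.funLeft 𝕜 𝕜 Subtype.val).comp Aᵀ.mulVecLin
  have hker : LinearMap.ker f ≠ ⊥ := LinearMap.ker_ne_bot_of_finrank_lt <| by
    rwa [Module.finrank_fintype_fun_eq_card, Module.finrank_fintype_fun_eq_card,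
      Fintype.card_eq_nat_card, Nat.card_coe_set_eq]
  obtain ⟨μ, hμ, hμ0⟩ := (Submodule.ne_bot_iff _).mp hker
  exact ⟨μ, hμ0, fun i hi => congrFun hμ ⟨i, hi⟩⟩

section Duality

variable {A : Matrix (Fin m) (Fin d) ℝ} {b : Fin m → ℝ} {c : Fin d → ℝ}

theorem dotProduct_le_of_mem_feasSet_of_mem_dualFeasSet {x : Fin d → ℝ} {l : Fin m → ℝ}
    (hx : x ∈ feasSet A b) (hl : l ∈ dualFeasSet A c) : b ⬝ᵥ l ≤ c ⬝ᵥ x := by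
  rw [← hx.1, dotProduct_comm, dotProduct_mulVec, ← mulVec_transpose]
  exact dotProduct_le_dotProduct_of_nonneg_right hl hx.2

theorem mem_dualOptSet_of_le {x : Fin d → ℝ} {l : Fin m → ℝ} (hx : x ∈ feasSet A b)
    (hl : l ∈ dualFeasSet A c) (hle : c ⬝ᵥ x ≤ b ⬝ᵥ l) : l ∈ dualOptSet A b c :=
  ⟨hl, fun _ hμ => (dotProduct_le_of_mem_feasSet_of_mem_dualFeasSet hx hμ).trans hle⟩

theorem dotProduct_eq_zero_of_mem_feasSet {x : Fin d → ℝ} {μ : Fin m → ℝ}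
    (hx : x ∈ feasSet A b) (hμ : ∀ j, x j ≠ 0 → (Aᵀ *ᵥ μ) j = 0) : b ⬝ᵥ μ = 0 := by
  rw [← hx.1, dotProduct_comm, dotProduct_mulVec, ← mulVec_transpose]
  refine Finset.sum_eq_zero fun j _ => ?_
  rcases eq_or_ne (x j) 0 with hj | hj
  · rw [hj, mul_zero]
  · rw [hμ j hj, zero_mul]

theorem eq_of_mem_feasSet_of_le {x₀ y : Fin d → ℝ} (hopt : optSet A b c = {x₀})
    (hy : y ∈ feasSet A b) (hle : c ⬝ᵥ y ≤ c ⬝ᵥ x₀) : y = x₀ := by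
  have hx₀ : x₀ ∈ optSet A b c := hopt.symm ▸ rfl
  rw [← Set.mem_singleton_iff, ← hopt]
  exact ⟨hy, fun z hz => hle.trans (hx₀.2 z hz)⟩

theorem eq_zero_of_optSet_eq_singleton {x₀ x : Fin d → ℝ} {α β : ℝ}
    (hopt : optSet A b c = {x₀}) (hx : 0 ≤ x) (hα : 0 ≤ α) (hβ : 0 ≤ β)
    (hAx : A *ᵥ x = α • b) (hcx : c ⬝ᵥ x + β = α * (c ⬝ᵥ x₀)) :
    β = 0 ∧ ∀ j, x₀ j = 0 → x j = 0 := by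
  have hx₀ : x₀ ∈ feasSet A b := (hopt.symm ▸ rfl : x₀ ∈ optSet A b c).1
  rcases hα.eq_or_lt with rfl | hα
  · have hfeas : x₀ + x ∈ feasSet A b :=
      ⟨by rw [mulVec_add, hx₀.1, hAx, zero_smul, add_zero], add_nonneg hx₀.2 hx⟩
    have hcost : c ⬝ᵥ (x₀ + x) = c ⬝ᵥ x₀ - β := by rw [dotProduct_add]; linarith
    have h := eq_of_mem_feasSet_of_le hopt hfeas (by linarith)
    refine ⟨by rw [h] at hcost; linarith, fun j _ => ?_⟩
    simpa using congrFun h j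
  · have hfeas : α⁻¹ • x ∈ feasSet A b :=
      ⟨by rw [mulVec_smul, hAx, inv_smul_smul₀ hα.ne'],
        smul_nonneg (inv_nonneg.mpr hα.le) hx⟩
    have hcost : c ⬝ᵥ (α⁻¹ • x) = c ⬝ᵥ x₀ - α⁻¹ * β := by
      rw [dotProduct_smul, smul_eq_mul, eq_sub_of_add_eq hcx]
      field_simp
    have h := eq_of_mem_feasSet_of_le hopt hfeas
      (by rw [hcost]; exact sub_le_self _ (mul_nonneg (inv_nonneg.mpr hα.le) hβ))
    refine ⟨?_, fun j hj => ?_⟩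
    · rw [h] at hcost
      exact (mul_eq_zero.mp (by linarith)).resolve_left (inv_ne_zero hα.ne')
    · simpa [hj, hα.ne'] using congrFun h j

theorem exists_mem_dualFeasSet_lt_of_optSet_eq_singleton {x₀ : Fin d → ℝ}
    (hopt : optSet A b c = {x₀}) :
    ∃ l ∈ dualFeasSet A c, c ⬝ᵥ x₀ ≤ b ⬝ᵥ l ∧ ∀ j, x₀ j = 0 → (Aᵀ *ᵥ l) j < c j := by
  set w : Fin d → ℝ := fun j => if x₀ j = 0 then 1 else 0
  -- Unknowns `(x, α, β) ≥ 0`: a solution would be `x` with `A x = α b`, `cᵀx + β = α cᵀx₀` and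
  -- `∑_{x₀ j = 0} x_j + β = 1`, which `eq_zero_of_optSet_eq_singleton` rules out. The
  -- certificate of infeasibility `(l, t₀, t₁)` yields the dual solution `l / t₀`.
  rcases farkas_finset Finset.univ
      (Sum.elim (fun j => Sum.elim (-Aᵀ j) ![c j, w j])
        ![Sum.elim b ![-(c ⬝ᵥ x₀), 0], Sum.elim 0 ![1, 1]])
      (Sum.elim 0 ![0, 1]) with ⟨u, hu, hsum⟩ | ⟨y, hy, hgy⟩
  · exfalso
    obtain ⟨h1, h2, h3⟩ : (∀ k, -∑ j, u (.inl j) * A k j + u (.inr 0) * b k = 0) ∧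
        ∑ j, u (.inl j) * c j + (-(u (.inr 0) * (c ⬝ᵥ x₀)) + u (.inr 1)) = 0 ∧
        ∑ j, u (.inl j) * w j + u (.inr 1) = 1 := by
      simpa [Fintype.sum_sum_type, Fin.sum_univ_two] using congrFun hsum
    have hAx : A *ᵥ (u ∘ Sum.inl) = u (.inr 0) • b := funext fun k => by
      simp only [mulVec, dotProduct, Function.comp_apply, Pi.smul_apply, smul_eq_mul,
        mul_comm (A k _)]
      linarith [h1 k]
    have hcx : c ⬝ᵥ (u ∘ Sum.inl) + u (.inr 1) = u (.inr 0) * (c ⬝ᵥ x₀) := by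
      simp only [dotProduct, Function.comp_apply, mul_comm (c _)] at h2 ⊢
      linarith
    obtain ⟨hβ, hx⟩ := eq_zero_of_optSet_eq_singleton hopt (fun j => hu _) (hu _) (hu _) hAx hcx
    rw [hβ, add_zero, Finset.sum_eq_zero fun j _ => ?_] at h3
    · exact zero_ne_one h3
    · rcases eq_or_ne (x₀ j) 0 with hj | hj
      · rw [show u (.inl j) = 0 from hx j hj, zero_mul]
      · simp [w, hj]
  · obtain ⟨l, t₀, t₁, rfl⟩ : ∃ l t₀ t₁, y = Sum.elim l ![t₀, t₁] :=
      ⟨_, _, _, by rw [← Sum.elim_comp_inl_inr y]; congr 1; ext i; fin_cases i <;> rfl⟩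
    obtain ⟨hyA, hyb, ht⟩ : (∀ j, Aᵀ j ⬝ᵥ l ≤ c j * t₀ + w j * t₁) ∧
        c ⬝ᵥ x₀ * t₀ ≤ b ⬝ᵥ l ∧ 0 ≤ t₀ + t₁ := by
      simpa [Sum.forall, Fin.forall_fin_two, sumElim_dotProduct_sumElim] using hy
    replace hgy : t₁ < 0 := by simpa [sumElim_dotProduct_sumElim] using hgy
    have ht₀ : 0 < t₀ := by linarith
    have hslack (j : Fin d) : (Aᵀ *ᵥ (t₀⁻¹ • l)) j ≤ c j + t₀⁻¹ * (w j * t₁) := by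
      rw [mulVec_smul, Pi.smul_apply, smul_eq_mul]
      calc t₀⁻¹ * (Aᵀ *ᵥ l) j ≤ t₀⁻¹ * (c j * t₀ + w j * t₁) :=
            mul_le_mul_of_nonneg_left (hyA j) (inv_nonneg.mpr ht₀.le)
        _ = c j + t₀⁻¹ * (w j * t₁) := by field_simp
    refine ⟨t₀⁻¹ • l, fun j => (hslack j).trans ?_, ?_, fun j hj => (hslack j).trans_lt ?_⟩
    · have : w j * t₁ ≤ 0 := mul_nonpos_of_nonneg_of_nonpos (by positivity) hgy.le
      nlinarith [inv_pos.mpr ht₀]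
    · rw [dotProduct_smul, smul_eq_mul, le_inv_mul_iff₀ ht₀]
      linarith
    · simp only [w, hj, if_true, one_mul, add_lt_iff_neg_left]
      exact mul_neg_of_pos_of_neg (inv_pos.mpr ht₀) hgy

open Filter Topology in
theorem exists_ne_zero_add_smul_mem_dualFeasSet {l μ : Fin m → ℝ} (hl : l ∈ dualFeasSet A c)
    (h : ∀ j, (Aᵀ *ᵥ l) j < c j ∨ (Aᵀ *ᵥ μ) j = 0) :
    ∃ t : ℝ, t ≠ 0 ∧ l + t • μ ∈ dualFeasSet A c := by
  have hev : ∀ᶠ t in 𝓝 (0 : ℝ), l + t • μ ∈ dualFeasSet A c := by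
    simp only [dualFeasSet, Set.mem_ofPred_eq, mulVec_add, mulVec_smul, Pi.add_apply,
      Pi.smul_apply, smul_eq_mul, eventually_all]
    intro j
    rcases h j with hlt | h0
    · refine Tendsto.eventually_le_const hlt ?_
      exact (by fun_prop : Continuous fun t : ℝ => (Aᵀ *ᵥ l) j + t * (Aᵀ *ᵥ μ) j).tendsto' 0 _
        (by simp)
    · simpa [h0] using hl j
  obtain ⟨t, ht, ht0⟩ :=
    ((hev.filter_mono nhdsWithin_le_nhds).and self_mem_nhdsWithin).exists (f := 𝓝[≠] 0)
  exact ⟨t, ht0, ht⟩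

end Duality

theorem stmt3_general
    (A : Matrix (Fin m) (Fin d) ℝ)
    (b : Fin m → ℝ) (c : Fin d → ℝ)
    (hopt : ∃ e : Fin m → Fin d, IsBasis A e ∧
      optSet A b c = {basicSol A e b} ∧
      {i | basicSol A e b i ≠ 0}.ncard < m) :
    ∃ l1 l2 : Fin m → ℝ, l1 ∈ dualOptSet A b c ∧ l2 ∈ dualOptSet A b c ∧
      l1 ≠ l2 := by
  obtain ⟨e, -, hopt, hdeg⟩ := hopt
  set x₀ := basicSol A e b
  have hx₀ : x₀ ∈ feasSet A b := (hopt.symm ▸ rfl : x₀ ∈ optSet A b c).1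
  obtain ⟨l, hl, hlx₀, hslack⟩ := exists_mem_dualFeasSet_lt_of_optSet_eq_singleton hopt
  obtain ⟨μ, hμ, hμx₀⟩ :=
    A.exists_ne_zero_forall_mem_transpose_mulVec_eq_zero (by simpa using hdeg)
  have hbμ : b ⬝ᵥ μ = 0 := dotProduct_eq_zero_of_mem_feasSet hx₀ hμx₀
  obtain ⟨t, ht, hlt⟩ := exists_ne_zero_add_smul_mem_dualFeasSet hl fun j =>
    (eq_or_ne (x₀ j) 0).imp (hslack j) (hμx₀ j)
  refine ⟨l, l + t • μ, mem_dualOptSet_of_le hx₀ hl hlx₀, mem_dualOptSet_of_le hx₀ hlt ?_, ?_⟩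
  · rwa [dotProduct_add, dotProduct_smul, hbμ, smul_zero, add_zero]
  · simpa [smul_eq_zero, hμ] using ht

/-- Proposition 2.5 (iii): if `(P_b)` has a unique optimal solution which is a
degenerate basic solution (fewer than `m` nonzero coordinates), then the dual
`(D_b)` has at least two distinct optimal solutions. -/
theorem stmt3 (hm : 1 ≤ m) (hmd : m ≤ d)
    (A : Matrix (Fin m) (Fin d) ℝ) (hA : A.rank = m)
    (b : Fin m → ℝ) (c : Fin d → ℝ)
    (hopt : ∃ e : Fin m → Fin d, IsBasis A e ∧
      optSet A b c = {basicSol A e b} ∧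
      {i | basicSol A e b i ≠ 0}.ncard < m) :
    ∃ l1 l2 : Fin m → ℝ, l1 ∈ dualOptSet A b c ∧ l2 ∈ dualOptSet A b c ∧
      l1 ≠ l2 :=
  stmt3_general A b c hopt
end
end

section
/- Assume (A1) the optimality set OPT(b) is non-empty and bounded, and (B2) ℙ(OPT(b_n) ≠ ∅) → 1. Suppose the random vectors b_n are consistent estimators of b with ‖b_n − b‖ = O_ℙ(r_n^{-1}), i.e. for every ε > 0 there exist M > 0 and N such that ℙ(r_n‖b_n − b‖ > M) < ε for all n ≥ N. Then the Hausdorff distance between the empirical and true optimality sets satisfies d_H(OPT(b_n), OPT(b)) = O_ℙ(r_n^{-1}), i.e. for every ε > 0 there exist M > 0 and N such that ℙ(r_n · d_H(OPT(b_n), OPT(b)) > M) < ε for all n ≥ N. -/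
open Matrix

noncomputable section

variable {m d : ℕ}

/-!
For fixed `A` and `c`, the optimal set `OPT(β) = {x ∈ P(β) | cᵀx ≤ cᵀz}` (`z` any optimal point)
is a polyhedron, and by Hoffman's bound the distance from a point to a polyhedron is at most a
constant times the point's constraint violation, uniformly in the right-hand side. Applied to
`P(β₁)`, it yields a point near an optimal point of `β₂`, so the optimal value for `β₁` exceeds
that for `β₂` by `O(‖β₁ - β₂‖)`; hence the optimal points of `β₁` violate the constraints of
`OPT(β₂)` by `O(‖β₁ - β₂‖)`, and a second application moves them into `OPT(β₂)`. Thus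
`β ↦ OPT(β)` is Lipschitz for the Hausdorff distance, and `r_n d_H(OPT(b_n), OPT(b))` inherits
the tightness of `r_n ‖b_n - b‖`.

Hoffman's bound: let `p` be the projection of `x` onto `{y | ⟪u i, y⟫ ≤ q i ∀ i}`. By Farkas'
lemma `x - p` is a nonnegative combination of the normals of the constraints active at `p`, and
by Carathéodory's theorem for cones one may take these normals linearly independent; then the
coefficients are bounded by a constant times `‖x - p‖`, and pairing `x - p` with itself gives
`‖x - p‖² ≤ K r ‖x - p‖`.
-/

open scoped RealInnerProductSpace

section Caratheodory

variable {𝕜 M ι : Type*} [Field 𝕜] [LinearOrder 𝕜] [AddCommGroup M] [Module 𝕜 M]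

variable (𝕜) in
def nonnegSpan (u : ι → M) (J : Finset ι) : Set M :=
  {w | ∃ μ : ι → 𝕜, (∀ i ∈ J, 0 ≤ μ i) ∧ ∑ i ∈ J, μ i • u i = w}

variable {u : ι → M} {J : Finset ι}

lemma zero_mem_nonnegSpan : (0 : M) ∈ nonnegSpan 𝕜 u J :=
  ⟨0, fun _ _ => le_rfl, by simp⟩

lemma mem_nonnegSpan_of_mem [IsStrictOrderedRing 𝕜] [DecidableEq ι] {i : ι} (hi : i ∈ J) :
    u i ∈ nonnegSpan 𝕜 u J :=
  ⟨Pi.single i 1, fun j _ => by by_cases h : j = i <;> simp [h], by simp [Pi.single_apply, hi]⟩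

lemma smul_mem_nonnegSpan [IsStrictOrderedRing 𝕜] {c : 𝕜} (hc : 0 ≤ c) {w : M}
    (hw : w ∈ nonnegSpan 𝕜 u J) : c • w ∈ nonnegSpan 𝕜 u J := by
  obtain ⟨μ, hμ, rfl⟩ := hw
  exact ⟨c • μ, fun i hi => mul_nonneg hc (hμ i hi), by simp [Finset.smul_sum, mul_smul]⟩

lemma add_mem_nonnegSpan [IsStrictOrderedRing 𝕜] {w w' : M} (hw : w ∈ nonnegSpan 𝕜 u J)
    (hw' : w' ∈ nonnegSpan 𝕜 u J) : w + w' ∈ nonnegSpan 𝕜 u J := by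
  obtain ⟨μ, hμ, rfl⟩ := hw
  obtain ⟨μ', hμ', rfl⟩ := hw'
  exact ⟨μ + μ', fun i hi => add_nonneg (hμ i hi) (hμ' i hi),
    by simp [add_smul, Finset.sum_add_distrib]⟩

lemma convex_nonnegSpan [IsStrictOrderedRing 𝕜] : Convex 𝕜 (nonnegSpan 𝕜 u J) :=
  fun _ hx _ hy _ _ ha hb _ => add_mem_nonnegSpan (smul_mem_nonnegSpan ha hx)
    (smul_mem_nonnegSpan hb hy)

lemma nonnegSpan_mono {s : Finset ι} (h : s ⊆ J) : nonnegSpan 𝕜 u s ⊆ nonnegSpan 𝕜 u J := by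
  classical
  rintro _ ⟨μ, hμ, rfl⟩
  refine ⟨fun i => if i ∈ s then μ i else 0, fun i _ => ?_, ?_⟩
  · by_cases hi : i ∈ s <;> simp [hi, hμ]
  · rw [← Finset.sum_subset h fun i _ hi => by simp [hi]]
    exact Finset.sum_congr rfl fun i hi => by simp [hi]

lemma exists_pos_sum_smul_eq_zero [IsStrictOrderedRing 𝕜] (h : ¬LinearIndepOn 𝕜 u J) :
    ∃ g : ι → 𝕜, ∑ i ∈ J, g i • u i = 0 ∧ ∃ i ∈ J, 0 < g i := by
  obtain ⟨g, hg, i, hi, hgi⟩ := not_linearIndepOn_finset_iff.1 h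
  rcases hgi.lt_or_gt with hneg | hpos
  · exact ⟨-g, by simp [neg_smul, Finset.sum_neg_distrib, hg], i, hi, by simpa using hneg⟩
  · exact ⟨g, hg, i, hi, hpos⟩

-- Move along a linear dependence until the first coefficient vanishes.
lemma exists_nonneg_sum_erase_eq [IsStrictOrderedRing 𝕜] [DecidableEq ι]
    (hJ : ¬LinearIndepOn 𝕜 u J) {μ : ι → 𝕜} (hμ : ∀ i ∈ J, 0 ≤ μ i) :
    ∃ i₀ ∈ J, ∃ μ' : ι → 𝕜, (∀ i ∈ J.erase i₀, 0 ≤ μ' i) ∧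
      ∑ i ∈ J.erase i₀, μ' i • u i = ∑ i ∈ J, μ i • u i := by
  obtain ⟨g, hg, i₁, hi₁, hgi₁⟩ := exists_pos_sum_smul_eq_zero hJ
  have hT : (J.filter (0 < g ·)).Nonempty := ⟨i₁, Finset.mem_filter.2 ⟨hi₁, hgi₁⟩⟩
  obtain ⟨i₀, hi₀, hmin⟩ := (J.filter (0 < g ·)).exists_min_image (fun i => μ i / g i) hT
  obtain ⟨hi₀J, hgi₀⟩ := Finset.mem_filter.1 hi₀
  set t := μ i₀ / g i₀
  have ht : 0 ≤ t := div_nonneg (hμ i₀ hi₀J) hgi₀.le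
  have hnonneg : ∀ i ∈ J, 0 ≤ μ i - t * g i := by
    intro i hi
    by_cases hgi : 0 < g i
    · have := (le_div_iff₀ hgi).1 (hmin i (Finset.mem_filter.2 ⟨hi, hgi⟩))
      linarith
    · nlinarith [hμ i hi]
  have hzero : μ i₀ - t * g i₀ = 0 := by
    rw [div_mul_cancel₀ _ hgi₀.ne', sub_self]
  refine ⟨i₀, hi₀J, fun i => μ i - t * g i,
    fun i hi => hnonneg i (Finset.mem_of_mem_erase hi), ?_⟩
  rw [Finset.sum_erase _ (by simp only [hzero, zero_smul])]
  simp only [sub_smul, mul_smul, Finset.sum_sub_distrib, ← Finset.smul_sum, hg, smul_zero,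
    sub_zero]

theorem nonnegSpan_eq_biUnion_linearIndepOn [IsStrictOrderedRing 𝕜] :
    nonnegSpan 𝕜 u J =
      ⋃ s ∈ {s : Finset ι | s ⊆ J ∧ LinearIndepOn 𝕜 u s}, nonnegSpan 𝕜 u s := by
  classical
  refine subset_antisymm ?_ (Set.iUnion₂_subset fun s hs => nonnegSpan_mono hs.1)
  induction J using Finset.strongInduction with
  | H J ih =>
    intro w hw
    by_cases hJ : LinearIndepOn 𝕜 u J
    · exact Set.mem_biUnion ⟨subset_rfl, hJ⟩ hw
    obtain ⟨μ, hμ, rfl⟩ := hw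
    obtain ⟨i₀, hi₀, μ', hμ', hsum⟩ := exists_nonneg_sum_erase_eq hJ hμ
    obtain ⟨s, ⟨hs, hind⟩, hw⟩ :=
      Set.mem_iUnion₂.1 (ih _ (Finset.erase_ssubset hi₀) ⟨μ', hμ', hsum⟩)
    exact Set.mem_biUnion ⟨hs.trans (J.erase_subset i₀), hind⟩ hw

end Caratheodory

section NormedSpace

open Filter

variable {E ι : Type*} [NormedAddCommGroup E] [NormedSpace ℝ E]

lemma isClosed_nonnegSpan_of_linearIndepOn {u : ι → E} {s : Finset ι}
    (hs : LinearIndepOn ℝ u s) : IsClosed (nonnegSpan ℝ u s) := by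
  set T := Fintype.linearCombination ℝ (fun i : s => u i)
  have hT : LinearMap.ker T = ⊥ :=
    LinearMap.ker_eq_bot.2 (linearIndependent_iff_injective_fintypeLinearCombination.1 hs)
  have himage : nonnegSpan ℝ u s = T '' Set.Ici 0 := by
    ext w
    constructor
    · rintro ⟨μ, hμ, rfl⟩
      refine ⟨fun i => μ i, fun i => hμ i i.2, ?_⟩
      rw [Fintype.linearCombination_apply, Finset.sum_coe_sort s (fun i => μ i • u i)]
    · rintro ⟨v, hv, rfl⟩
      refine ⟨Function.extend Subtype.val v 0, fun i hi => ?_, ?_⟩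
      · rw [show i = ((⟨i, hi⟩ : s) : ι) from rfl, Subtype.val_injective.extend_apply]
        exact hv ⟨i, hi⟩
      · rw [← Finset.sum_coe_sort, Fintype.linearCombination_apply]
        simp only [Subtype.val_injective.extend_apply]
  rw [himage]
  exact (LinearMap.isClosedEmbedding_of_injective hT).isClosedMap _ isClosed_Ici

lemma isClosed_nonnegSpan (u : ι → E) (J : Finset ι) : IsClosed (nonnegSpan ℝ u J) := by
  rw [nonnegSpan_eq_biUnion_linearIndepOn]
  refine Set.Finite.isClosed_biUnion ?_ fun s hs => isClosed_nonnegSpan_of_linearIndepOn hs.2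
  exact J.powerset.finite_toSet.subset fun s hs => Finset.mem_powerset.2 hs.1

lemma LinearIndepOn.exists_sum_le_mul_norm {u : ι → E} {s : Finset ι} (hs : LinearIndepOn ℝ u s) :
    ∃ K, ∀ μ : ι → ℝ, ∑ i ∈ s, μ i ≤ K * ‖∑ i ∈ s, μ i • u i‖ := by
  set T := Fintype.linearCombination ℝ (fun i : s => u i)
  obtain ⟨K, -, hK⟩ := T.exists_antilipschitzWith
    (LinearMap.ker_eq_bot.2 (linearIndependent_iff_injective_fintypeLinearCombination.1 hs))
  refine ⟨s.card * K, fun μ => ?_⟩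
  set v : s → ℝ := fun i => μ i
  have hTv : T v = ∑ i ∈ s, μ i • u i := by
    rw [Fintype.linearCombination_apply, Finset.sum_coe_sort s (fun i => μ i • u i)]
  calc ∑ i ∈ s, μ i = ∑ i : s, v i := (Finset.sum_coe_sort s μ).symm
    _ ≤ ∑ _i : s, ‖v‖ := Finset.sum_le_sum fun i _ => (le_abs_self _).trans (norm_le_pi_norm v i)
    _ = s.card * ‖v‖ := by simp
    _ ≤ s.card * (K * ‖T v‖) := by gcongr; exact hK.le_mul_norm (map_zero T) v
    _ = s.card * K * ‖∑ i ∈ s, μ i • u i‖ := by rw [hTv, mul_assoc]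

lemma exists_sum_le_mul_norm_of_linearIndepOn [Finite ι] (u : ι → E) :
    ∃ K > 0, ∀ s : Finset ι, LinearIndepOn ℝ u s →
      ∀ μ : ι → ℝ, ∑ i ∈ s, μ i ≤ K * ‖∑ i ∈ s, μ i • u i‖ := by
  have : ∀ s : Finset ι, ∀ᶠ K in atTop, LinearIndepOn ℝ u s →
      ∀ μ : ι → ℝ, ∑ i ∈ s, μ i ≤ K * ‖∑ i ∈ s, μ i • u i‖ := by
    intro s
    by_cases hs : LinearIndepOn ℝ u s
    · obtain ⟨K₀, hK₀⟩ := hs.exists_sum_le_mul_norm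
      filter_upwards [eventually_ge_atTop K₀] with K hK _ μ
      exact (hK₀ μ).trans (by gcongr)
    · exact Eventually.of_forall fun _ h => absurd h hs
  obtain ⟨K, hK, hpos⟩ := ((eventually_all.2 this).and (eventually_gt_atTop 0)).exists
  exact ⟨K, hpos, hK⟩

end NormedSpace

section Hoffman

open Filter Topology

variable {E ι : Type*} [NormedAddCommGroup E] [InnerProductSpace ℝ E]

lemma exists_mem_forall_inner_sub_le_zero [CompleteSpace E] {S : Set E} (hne : S.Nonempty)
    (hS : IsClosed S) (hconv : Convex ℝ S) (x : E) : ∃ p ∈ S, ∀ y ∈ S, ⟪x - p, y - p⟫ ≤ 0 := by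
  obtain ⟨p, hp, hmin⟩ := exists_norm_eq_iInf_of_complete_convex hne hS.isComplete hconv x
  exact ⟨p, hp, (norm_eq_iInf_iff_real_inner_le_zero hconv hp).1 hmin⟩

theorem mem_nonnegSpan_of_forall_inner_le_zero [CompleteSpace E] {u : ι → E} {J : Finset ι}
    {w : E} (hw : ∀ h, (∀ i ∈ J, ⟪u i, h⟫ ≤ 0) → ⟪w, h⟫ ≤ 0) : w ∈ nonnegSpan ℝ u J := by
  classical
  by_contra hwJ
  obtain ⟨f, s, hfs, hsw⟩ :=
    geometric_hahn_banach_closed_point convex_nonnegSpan (isClosed_nonnegSpan u J) hwJ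
  have hs : 0 < s := by simpa using hfs 0 zero_mem_nonnegSpan
  -- `f` is bounded above on a cone, hence nonpositive on it
  have hf : ∀ y ∈ nonnegSpan ℝ u J, f y ≤ 0 := fun y hy => by
    by_contra! hpos
    have := hfs _ (smul_mem_nonnegSpan (div_nonneg hs.le hpos.le) hy)
    rw [map_smul, smul_eq_mul, div_mul_cancel₀ _ hpos.ne'] at this
    exact lt_irrefl _ this
  have hfw := hw ((InnerProductSpace.toDual ℝ E).symm f) fun i hi => by
    rw [real_inner_comm, InnerProductSpace.toDual_symm_apply]
    exact hf _ (mem_nonnegSpan_of_mem hi)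
  rw [real_inner_comm, InnerProductSpace.toDual_symm_apply] at hfw
  linarith

lemma exists_pos_forall_inner_add_smul_le [Finite ι] {u : ι → E} {q : ι → ℝ} {p h : E}
    (hp : ∀ i, ⟪u i, p⟫ ≤ q i) (hh : ∀ i, ⟪u i, p⟫ = q i → ⟪u i, h⟫ ≤ 0) :
    ∃ t : ℝ, 0 < t ∧ ∀ i, ⟪u i, p + t • h⟫ ≤ q i := by
  have : ∀ᶠ t in 𝓝[>] (0 : ℝ), ∀ i, ⟪u i, p + t • h⟫ ≤ q i := by
    refine eventually_all.2 fun i => ?_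
    simp only [inner_add_right, real_inner_smul_right]
    rcases (hp i).eq_or_lt with heq | hlt
    · filter_upwards [self_mem_nhdsWithin] with t (ht : 0 < t)
      nlinarith [hh i heq]
    · have hlim : Tendsto (fun t : ℝ => ⟪u i, p⟫ + t * ⟪u i, h⟫) (𝓝[>] 0) (𝓝 ⟪u i, p⟫) :=
        ((continuous_const.add (continuous_id.mul continuous_const)).tendsto' 0 _
          (by simp)).mono_left nhdsWithin_le_nhds
      exact (hlim.eventually (gt_mem_nhds hlt)).mono fun t ht => ht.le
  obtain ⟨t, ht, hpos⟩ := (this.and self_mem_nhdsWithin).exists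
  exact ⟨t, hpos, ht⟩

theorem mem_nonnegSpan_of_forall_inner_sub_le_zero [CompleteSpace E] [Finite ι] {u : ι → E}
    {q : ι → ℝ} {p w : E} {J : Finset ι} (hp : ∀ i, ⟪u i, p⟫ ≤ q i)
    (hJ : ∀ i, i ∈ J ↔ ⟪u i, p⟫ = q i) (hw : ∀ y, (∀ i, ⟪u i, y⟫ ≤ q i) → ⟪w, y - p⟫ ≤ 0) :
    w ∈ nonnegSpan ℝ u J := by
  refine mem_nonnegSpan_of_forall_inner_le_zero fun h hh => ?_
  obtain ⟨t, ht, hmem⟩ := exists_pos_forall_inner_add_smul_le hp fun i hi => hh i ((hJ i).2 hi)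
  have := hw _ hmem
  rw [add_sub_cancel_left, real_inner_smul_right] at this
  nlinarith

theorem exists_hoffman_bound [CompleteSpace E] [Finite ι] (u : ι → E) :
    ∃ H > 0, ∀ (q : ι → ℝ) (r : ℝ), 0 ≤ r → (∃ x₀, ∀ i, ⟪u i, x₀⟫ ≤ q i) →
      ∀ x, (∀ i, ⟪u i, x⟫ ≤ q i + r) → ∃ y, (∀ i, ⟪u i, y⟫ ≤ q i) ∧ ‖x - y‖ ≤ H * r := by
  classical
  have := Fintype.ofFinite ι
  obtain ⟨K, hK, hKbound⟩ := exists_sum_le_mul_norm_of_linearIndepOn u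
  refine ⟨K, hK, fun q r hr hne x hx => ?_⟩
  have hS : {y | ∀ i, ⟪u i, y⟫ ≤ q i} = ⋂ i, {y | ⟪u i, y⟫ ≤ q i} := Set.ofPred_forall _
  have hclosed : IsClosed {y | ∀ i, ⟪u i, y⟫ ≤ q i} := hS ▸ isClosed_iInter fun i =>
    isClosed_le (continuous_const.inner continuous_id) continuous_const
  have hconv : Convex ℝ {y | ∀ i, ⟪u i, y⟫ ≤ q i} := hS ▸ convex_iInter fun i =>
    convex_halfSpace_le (innerₛₗ ℝ (u i)).isLinear (q i)
  obtain ⟨p, hp, hproj⟩ := exists_mem_forall_inner_sub_le_zero hne hclosed hconv x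
  let J := Finset.univ.filter fun i => ⟪u i, p⟫ = q i
  have hw : x - p ∈ nonnegSpan ℝ u J :=
    mem_nonnegSpan_of_forall_inner_sub_le_zero hp (by simp [J]) hproj
  rw [nonnegSpan_eq_biUnion_linearIndepOn] at hw
  obtain ⟨s, ⟨hsJ, hs⟩, μ, hμ, hsum⟩ := Set.mem_iUnion₂.1 hw
  have hactive : ∀ i ∈ s, ⟪u i, x - p⟫ ≤ r := fun i hi => by
    rw [inner_sub_right, (Finset.mem_filter.1 (hsJ hi)).2]
    linarith [hx i]
  -- pair `x - p = ∑ μ i • u i` with itself: only active constraints occur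
  have key : ‖x - p‖ ^ 2 ≤ K * r * ‖x - p‖ := calc
    ‖x - p‖ ^ 2 = ∑ i ∈ s, μ i * ⟪u i, x - p⟫ := by
      rw [← real_inner_self_eq_norm_sq]
      nth_rw 1 [← hsum]
      simp only [sum_inner, real_inner_smul_left]
    _ ≤ ∑ i ∈ s, μ i * r :=
      Finset.sum_le_sum fun i hi => mul_le_mul_of_nonneg_left (hactive i hi) (hμ i hi)
    _ = (∑ i ∈ s, μ i) * r := (Finset.sum_mul _ _ _).symm
    _ ≤ K * ‖x - p‖ * r := mul_le_mul_of_nonneg_right ((hKbound s hs μ).trans_eq (by rw [hsum])) hr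
    _ = K * r * ‖x - p‖ := by ring
  exact ⟨p, hp, by nlinarith [norm_nonneg (x - p), mul_nonneg hK.le hr]⟩

end Hoffman

section Coordinates

open WithLp

lemma dotProduct_le_sum_abs_mul_norm {n : Type*} [Fintype n] (c v : n → ℝ) :
    c ⬝ᵥ v ≤ (∑ j, |c j|) * ‖v‖ := by
  rw [dotProduct, Finset.sum_mul]
  refine Finset.sum_le_sum fun j _ => ?_
  calc c j * v j ≤ |c j * v j| := le_abs_self _
    _ = |c j| * ‖v j‖ := by rw [abs_mul, Real.norm_eq_abs]
    _ ≤ |c j| * ‖v‖ := by gcongr; exact norm_le_pi_norm v j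

theorem exists_hoffman_bound_dotProduct {n : ℕ} {ι : Type*} [Finite ι] (a : ι → Fin n → ℝ) :
    ∃ H > 0, ∀ (q : ι → ℝ) (r : ℝ), 0 ≤ r → (∃ x₀, ∀ i, a i ⬝ᵥ x₀ ≤ q i) →
      ∀ x, (∀ i, a i ⬝ᵥ x ≤ q i + r) → ∃ y, (∀ i, a i ⬝ᵥ y ≤ q i) ∧ ‖x - y‖ ≤ H * r := by
  obtain ⟨H, hH, hbound⟩ := exists_hoffman_bound fun i => toLp 2 (a i)
  have hinner : ∀ i x, ⟪toLp 2 (a i), toLp 2 x⟫ = a i ⬝ᵥ x := fun i x => by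
    rw [EuclideanSpace.inner_toLp_toLp, dotProduct_comm]
    rfl
  refine ⟨H, hH, fun q r hr ⟨x₀, hx₀⟩ x hx => ?_⟩
  obtain ⟨y, hy, hxy⟩ := hbound q r hr ⟨toLp 2 x₀, by simpa only [hinner] using hx₀⟩ (toLp 2 x)
    (by simpa only [hinner] using hx)
  refine ⟨ofLp y, fun i => by simpa only [← hinner, toLp_ofLp] using hy i, le_trans ?_ hxy⟩
  exact (pi_norm_le_iff_of_nonneg (norm_nonneg _)).2 fun j => PiLp.norm_apply_le (toLp 2 x - y) j

end Coordinates

section LinearProgram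

def lpRows (A : Matrix (Fin m) (Fin d) ℝ) (c : Fin d → ℝ) :
    Fin m ⊕ Fin m ⊕ Fin d ⊕ Unit → Fin d → ℝ
  | .inl i => A i
  | .inr (.inl i) => -A i
  | .inr (.inr (.inl j)) => -Pi.single j 1
  | .inr (.inr (.inr _)) => c

def lpRhs (β : Fin m → ℝ) (t : ℝ) : Fin m ⊕ Fin m ⊕ Fin d ⊕ Unit → ℝ
  | .inl i => β i
  | .inr (.inl i) => -β i
  | .inr (.inr (.inl _)) => 0
  | .inr (.inr (.inr _)) => t

variable {A : Matrix (Fin m) (Fin d) ℝ} {c : Fin d → ℝ} {β : Fin m → ℝ} {t : ℝ}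
  {x : Fin d → ℝ}

lemma forall_lpRows_le_iff :
    (∀ k, lpRows A c k ⬝ᵥ x ≤ lpRhs β t k) ↔ x ∈ feasSet A β ∧ c ⬝ᵥ x ≤ t := by
  have hrow (i : Fin m) : A i ⬝ᵥ x = (A *ᵥ x) i := rfl
  simp only [Sum.forall, lpRows, lpRhs, neg_dotProduct, single_one_dotProduct, neg_le_neg_iff,
    neg_nonpos, hrow, feasSet, Set.mem_ofPred_eq, le_antisymm_iff, forall_const]
  tauto

lemma lpRows_le_add_of_mem_feasSet {β' : Fin m → ℝ} {r : ℝ} (hx : x ∈ feasSet A β')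
    (hβ : ‖β' - β‖ ≤ r) (hc : c ⬝ᵥ x ≤ t + r) (k : Fin m ⊕ Fin m ⊕ Fin d ⊕ Unit) :
    lpRows A c k ⬝ᵥ x ≤ lpRhs β t k + r := by
  have hcoord (i : Fin m) : |(A *ᵥ x) i - β i| ≤ r := by
    rw [hx.1, ← Real.norm_eq_abs]
    exact (norm_le_pi_norm (β' - β) i).trans hβ
  have hr : 0 ≤ r := (norm_nonneg _).trans hβ
  rcases k with i | i | j | _ <;> simp only [lpRows, lpRhs, neg_dotProduct, single_one_dotProduct]
  · linarith [(abs_le.1 (hcoord i)).2, show A i ⬝ᵥ x = (A *ᵥ x) i from rfl]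
  · linarith [(abs_le.1 (hcoord i)).1, show A i ⬝ᵥ x = (A *ᵥ x) i from rfl]
  · linarith [hx.2 j]
  · exact hc

theorem exists_feasSet_hoffman_bound (A : Matrix (Fin m) (Fin d) ℝ) (c : Fin d → ℝ) :
    ∃ H > 0, ∀ (β β' : Fin m → ℝ) (t r : ℝ), ‖β' - β‖ ≤ r →
      (∃ x₀ ∈ feasSet A β, c ⬝ᵥ x₀ ≤ t) → ∀ x ∈ feasSet A β', c ⬝ᵥ x ≤ t + r →
      ∃ y ∈ feasSet A β, c ⬝ᵥ y ≤ t ∧ ‖x - y‖ ≤ H * r := by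
  obtain ⟨H, hH, hbound⟩ := exists_hoffman_bound_dotProduct (lpRows A c)
  refine ⟨H, hH, fun β β' t r hβ ⟨x₀, hx₀, hcx₀⟩ x hx hcx => ?_⟩
  obtain ⟨y, hy, hxy⟩ := hbound (lpRhs β t) r ((norm_nonneg _).trans hβ)
    ⟨x₀, forall_lpRows_le_iff.2 ⟨hx₀, hcx₀⟩⟩ x (lpRows_le_add_of_mem_feasSet hx hβ hcx)
  obtain ⟨hyfeas, hcy⟩ := forall_lpRows_le_iff.1 hy
  exact ⟨y, hyfeas, hcy, hxy⟩

theorem exists_forall_mem_optSet_exists_dist_le (A : Matrix (Fin m) (Fin d) ℝ)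
    (c : Fin d → ℝ) :
    ∃ C > 0, ∀ β₁ β₂ : Fin m → ℝ, ∀ x ∈ optSet A β₁ c, ∀ z ∈ optSet A β₂ c,
      ∃ y ∈ optSet A β₂ c, dist x y ≤ C * ‖β₁ - β₂‖ := by
  obtain ⟨H, hH, hoff⟩ := exists_feasSet_hoffman_bound A c
  set L := ∑ j, |c j|
  have hL : 0 ≤ L := by positivity
  refine ⟨H * (1 + L * H), by positivity, fun β₁ β₂ x hx z hz => ?_⟩
  set Δ := ‖β₁ - β₂‖
  have hΔ : 0 ≤ Δ := norm_nonneg _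
  -- a point of `P(β₁)` near `z` bounds the optimal value of `β₁` by that of `β₂`
  obtain ⟨y₁, hy₁, -, hzy₁⟩ := hoff β₁ β₂ (max (c ⬝ᵥ x) (c ⬝ᵥ z)) Δ (norm_sub_rev _ _).le
    ⟨x, hx.1, le_max_left _ _⟩ z hz.1 (by linarith [le_max_right (c ⬝ᵥ x) (c ⬝ᵥ z)])
  have hval : c ⬝ᵥ x ≤ c ⬝ᵥ z + L * H * Δ := calc
    c ⬝ᵥ x ≤ c ⬝ᵥ y₁ := hx.2 y₁ hy₁
    _ = c ⬝ᵥ z + c ⬝ᵥ (y₁ - z) := by rw [dotProduct_sub]; ring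
    _ ≤ c ⬝ᵥ z + L * ‖y₁ - z‖ := by gcongr; exact dotProduct_le_sum_abs_mul_norm c _
    _ ≤ c ⬝ᵥ z + L * (H * Δ) := by rw [norm_sub_rev]; gcongr
    _ = c ⬝ᵥ z + L * H * Δ := by ring
  -- so `x` violates the constraints of `OPT(β₂) = {y ∈ P(β₂) | cᵀy ≤ cᵀz}` by `O(Δ)`
  obtain ⟨y, hy, hcy, hxy⟩ := hoff β₂ β₁ (c ⬝ᵥ z) ((1 + L * H) * Δ)
    (le_mul_of_one_le_left hΔ (le_add_of_nonneg_right (mul_nonneg hL hH.le)))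
    ⟨z, hz.1, le_rfl⟩ x hx.1 (by linarith)
  refine ⟨y, ⟨hy, fun w hw => hcy.trans (hz.2 w hw)⟩, ?_⟩
  rw [dist_eq_norm, mul_assoc]
  exact hxy

theorem exists_hausdorffDist_optSet_le (A : Matrix (Fin m) (Fin d) ℝ) (c : Fin d → ℝ) :
    ∃ C > 0, ∀ β₁ β₂ : Fin m → ℝ,
      Metric.hausdorffDist (optSet A β₁ c) (optSet A β₂ c) ≤ C * ‖β₁ - β₂‖ := by
  obtain ⟨C, hC, hstab⟩ := exists_forall_mem_optSet_exists_dist_le A c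
  refine ⟨C, hC, fun β₁ β₂ => ?_⟩
  -- `hausdorffDist` is `0` as soon as one of the sets is empty
  rcases (optSet A β₁ c).eq_empty_or_nonempty with h₁ | ⟨x₁, hx₁⟩
  · rw [h₁, Metric.hausdorffDist_empty']
    positivity
  rcases (optSet A β₂ c).eq_empty_or_nonempty with h₂ | ⟨x₂, hx₂⟩
  · rw [h₂, Metric.hausdorffDist_empty]
    positivity
  refine Metric.hausdorffDist_le_of_mem_dist (by positivity)
    (fun x hx => hstab β₁ β₂ x hx x₂ hx₂) fun y hy => ?_
  obtain ⟨x, hx, hyx⟩ := hstab β₂ β₁ y hy x₁ hx₁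
  exact ⟨x, hx, by rwa [norm_sub_rev]⟩

end LinearProgram

open MeasureTheory Filter Topology

theorem stmt7_general {Ω : Type*} [MeasurableSpace Ω] (P : Measure Ω)
    (A : Matrix (Fin m) (Fin d) ℝ)
    (b : Fin m → ℝ) (c : Fin d → ℝ)
    (bn : ℕ → Ω → Fin m → ℝ)
    (rn : ℕ → ℝ) (hrnpos : ∀ n, 0 < rn n)
    (hrate : ∀ ε : ENNReal, 0 < ε → ∃ M : ℝ, 0 < M ∧ ∃ N : ℕ, ∀ n ≥ N,
      P {ω | M < rn n * ‖bn n ω - b‖} < ε) :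
    ∀ ε : ENNReal, 0 < ε → ∃ M : ℝ, 0 < M ∧ ∃ N : ℕ, ∀ n ≥ N,
      P {ω | M < rn n *
          Metric.hausdorffDist (optSet A (bn n ω) c) (optSet A b c)} < ε := by
  intro ε hε
  obtain ⟨C, hC, hstab⟩ := exists_hausdorffDist_optSet_le A c
  obtain ⟨M, hM, N, hN⟩ := hrate ε hε
  refine ⟨C * M, mul_pos hC hM, N, fun n hn => (measure_mono fun ω hω => ?_).trans_lt (hN n hn)⟩
  have := hω.trans_le (mul_le_mul_of_nonneg_left (hstab (bn n ω) b) (hrnpos n).le)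
  rw [mul_left_comm] at this
  exact lt_of_mul_lt_mul_left this hC.le

/-- Theorem 3.3: assume (A1) `OPT(b)` is non-empty and bounded, (B2)
`ℙ(OPT(b_n) ≠ ∅) → 1`, and `‖b_n − b‖ = O_ℙ(r_n⁻¹)`. Then the Hausdorff
distance between `OPT(b_n)` and `OPT(b)` satisfies
`d_H(OPT(b_n), OPT(b)) = O_ℙ(r_n⁻¹)`. -/
theorem stmt7 {Ω : Type*} [MeasurableSpace Ω] (P : Measure Ω) [IsProbabilityMeasure P]
    (hm : 1 ≤ m) (hmd : m ≤ d)
    (A : Matrix (Fin m) (Fin d) ℝ) (hA : A.rank = m)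
    (b : Fin m → ℝ) (c : Fin d → ℝ)
    (hne : (optSet A b c).Nonempty) (hbd : Bornology.IsBounded (optSet A b c))
    (bn : ℕ → Ω → Fin m → ℝ) (hbn : ∀ n, Measurable (bn n))
    (rn : ℕ → ℝ) (hrnpos : ∀ n, 0 < rn n) (hrn : Tendsto rn atTop atTop)
    (hfeas : Tendsto (fun n => P {ω | (optSet A (bn n ω) c).Nonempty}) atTop (𝓝 1))
    (hrate : ∀ ε : ENNReal, 0 < ε → ∃ M : ℝ, 0 < M ∧ ∃ N : ℕ, ∀ n ≥ N,
      P {ω | M < rn n * ‖bn n ω - b‖} < ε) :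
    ∀ ε : ENNReal, 0 < ε → ∃ M : ℝ, 0 < M ∧ ∃ N : ℕ, ∀ n ≥ N,
      P {ω | M < rn n *
          Metric.hausdorffDist (optSet A (bn n ω) c) (optSet A b c)} < ε :=
  stmt7_general P A b c bn rn hrnpos hrate

end
end
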